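/- Let P be a regular Markov chain on state space [N] with stationary distribution π and spectral expansion λ. Let m ≥ 1, ℓ ≥ 0, t > 0, and let H_1,…,H_N ∈ ℂ^{m×m} satisfy ‖H_i‖₂ ≤ ℓ for all i and Σ_{i∈[N]} π_i H_i = 0. Let E ∈ ℂ^{Nm×Nm} be the block-diagonal matrix with i-th diagonal block exp(tH_i), and let P̃ := P ⊗ I_m. Then for every z ∈ ℂ^{Nm}, ‖( P̃ᵀ E* z^⊥ )^⊥‖_π ≤ λ·exp(tℓ)·‖z^⊥‖_π. -/

import Mathlib

open scoped BigOperators Kronecker ComplexOrder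
open Matrix

/-- A (row-stochastic) Markov chain on a finite state space: nonnegative entries, rows sum to 1. -/
def IsMarkov {S : Type*} [Fintype S] (P : Matrix S S ℝ) : Prop :=
  (∀ i j, 0 ≤ P i j) ∧ ∀ i, ∑ j, P i j = 1

/-- A Markov chain is regular if some positive power has all entries strictly positive. -/
def IsRegularMC {S : Type*} [Fintype S] [DecidableEq S] (P : Matrix S S ℝ) : Prop :=
  ∃ k : ℕ, 0 < k ∧ ∀ i j, 0 < (P ^ k) i j

/-- `π` is a stationary distribution of `P`: strictly positive entries, sums to 1, `πᵀ P = πᵀ`. -/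
def IsStationaryMC {S : Type*} [Fintype S] (P : Matrix S S ℝ) (π : S → ℝ) : Prop :=
  (∀ i, 0 < π i) ∧ (∑ i, π i = 1) ∧ ∀ j, ∑ i, π i * P i j = π j

/-- A probability vector. -/
def IsProbVec {S : Type*} [Fintype S] (φ : S → ℝ) : Prop :=
  (∀ i, 0 ≤ φ i) ∧ ∑ i, φ i = 1

/-- The `π`-norm of a real vector `φ`: `‖φ‖_π = sqrt (∑ i, φ i ^ 2 / π i)`. -/
noncomputable def piNormR {S : Type*} [Fintype S] (π φ : S → ℝ) : ℝ :=
  Real.sqrt (∑ i, φ i ^ 2 / π i)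

/-- The `π`-inner product `⟨x, y⟩_π = y* Π⁻¹ x` on `ℂ^S`. -/
noncomputable def piInner {S : Type*} [Fintype S] (π : S → ℝ) (x y : S → ℂ) : ℂ :=
  ∑ i, (starRingEnd ℂ) (y i) * x i / (π i : ℂ)

/-- The `π`-norm of a complex vector. -/
noncomputable def piNorm {S : Type*} [Fintype S] (π : S → ℝ) (x : S → ℂ) : ℝ :=
  Real.sqrt (∑ i, ‖x i‖ ^ 2 / π i)

/-- The spectral expansion `λ(P)`: the supremum of `‖Pᵀ x‖_π / ‖x‖_π` over nonzero `x`
with `⟨x, π⟩_π = 0`. -/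
noncomputable def specExp {S : Type*} [Fintype S] (P : Matrix S S ℝ) (π : S → ℝ) : ℝ :=
  sSup {r : ℝ | ∃ x : S → ℂ, x ≠ 0 ∧ piInner π x (fun i => (π i : ℂ)) = 0 ∧
    r = piNorm π ((P.map Complex.ofReal)ᵀ *ᵥ x) / piNorm π x}

/-- The spectral (operator 2-)norm of a matrix. -/
noncomputable def matSpectralNorm {𝕜 : Type*} [RCLike 𝕜] {m n : Type*} [Fintype m] [Fintype n]
    (A : Matrix m n 𝕜) : ℝ :=
  sSup {r : ℝ | ∃ x : n → 𝕜, x ≠ 0 ∧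
    r = Real.sqrt (∑ i, ‖(A *ᵥ x) i‖ ^ 2) / Real.sqrt (∑ j, ‖x j‖ ^ 2)}

/-- The probability that a `k`-step random walk on `P` started from `φ` follows the
trajectory `v`, i.e. `φ (v 1) * ∏ j, P (v j) (v (j+1))`. -/
noncomputable def walkWeight {S : Type*} [Fintype S] (P : Matrix S S ℝ) (φ : S → ℝ)
    {k : ℕ} (v : Fin k → S) : ℝ :=
  if h : 0 < k then
    φ (v ⟨0, h⟩) * ∏ j : Fin (k - 1),
      P (v ⟨(j : ℕ), by have := j.isLt; omega⟩) (v ⟨(j : ℕ) + 1, by have := j.isLt; omega⟩)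
  else 0

/-- The probability of an event `E` under a `k`-step random walk on `P` started from `φ`. -/
noncomputable def walkProb {S : Type*} [Fintype S] (P : Matrix S S ℝ) (φ : S → ℝ)
    {k : ℕ} (E : Set (Fin k → S)) : ℝ :=
  ∑ v : Fin k → S, E.indicator (fun u => walkWeight P φ u) v

/-- The matrix exponential, `exp A = ∑ A^k / k!`. -/
noncomputable def mexp {m : Type*} [Fintype m] [DecidableEq m]
    (A : Matrix m m ℂ) : Matrix m m ℂ :=
  ∑' k : ℕ, ((k.factorial : ℂ)⁻¹) • A ^ k

/-- The block-diagonal matrix `diag (M 1, …, M N)`. -/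
def blockDiag' {S m : Type*} [DecidableEq S] (M : S → Matrix m m ℂ) :
    Matrix (S × m) (S × m) ℂ :=
  Matrix.of fun p q => if p.1 = q.1 then M p.1 p.2 q.2 else 0

/-- The `π`-inner product `⟨x, y⟩_π = y* (Π⁻¹ ⊗ I_m) x` on `ℂ^{N m}`. -/
noncomputable def piInnerKron {N m : ℕ} (π : Fin N → ℝ) (x y : Fin N × Fin m → ℂ) : ℂ :=
  ∑ p, (starRingEnd ℂ) (y p) * x p / (π p.1 : ℂ)

/-- The `π`-norm on `ℂ^{N m}`. -/
noncomputable def piNormKron {N m : ℕ} (π : Fin N → ℝ) (x : Fin N × Fin m → ℂ) : ℝ :=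
  Real.sqrt (∑ p, ‖x p‖ ^ 2 / π p.1)

/-- Membership in the subspace `U = {π ⊗ w : w ∈ ℂ^m}`. -/
def memU {N m : ℕ} (π : Fin N → ℝ) (x : Fin N × Fin m → ℂ) : Prop :=
  ∃ w : Fin m → ℂ, ∀ p, x p = (π p.1 : ℂ) * w p.2

/-- `π`-orthogonality to the subspace `U = {π ⊗ w : w ∈ ℂ^m}`. -/
noncomputable def perpU {N m : ℕ} (π : Fin N → ℝ) (x : Fin N × Fin m → ℂ) : Prop :=
  ∀ w : Fin m → ℂ, piInnerKron π x (fun p => (π p.1 : ℂ) * w p.2) = 0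

/-!
Write `v = E* z^⊥ = v^∥ + v^⊥`. Stationarity of `π` makes `P̃ᵀ` fix `U` pointwise, so
`y = P̃ᵀ v` equals `v^∥ + P̃ᵀ v^⊥` and `y^⊥` is the `U^⊥`-part of `P̃ᵀ v^⊥`; by Pythagoras
`‖y^⊥‖_π ≤ ‖P̃ᵀ v^⊥‖_π`. Every column of `v^⊥` (a vector in `ℂ^N`) is `π`-orthogonal to `π`,
so `P̃ᵀ = Pᵀ ⊗ I_m` shrinks it by `λ`, and Pythagoras again gives `‖v^⊥‖_π ≤ ‖v‖_π`.
Finally `E*` is block diagonal and acts inside each block of the `π`-norm with spectral norm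
`‖exp(tH_i)‖₂ ≤ exp(t‖H_i‖₂) ≤ exp(tℓ)`.
-/

open scoped Matrix.Norms.L2Operator

-- `‖1‖ ≤ 1` rather than `NormOneClass`: the L2 operator norm of the `0 × 0` identity is `0`.
theorem NormedSpace.norm_exp_le_exp_norm (𝕂 : Type*) {𝔸 : Type*} [RCLike 𝕂] [NormedRing 𝔸]
    [NormedAlgebra 𝕂 𝔸] (h1 : ‖(1 : 𝔸)‖ ≤ 1) (x : 𝔸) :
    ‖NormedSpace.exp x‖ ≤ Real.exp ‖x‖ := by
  have hsum := NormedSpace.norm_expSeries_summable' (𝕂 := 𝕂) x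
  have hpow : ∀ n : ℕ, ‖x ^ n‖ ≤ ‖x‖ ^ n
    | 0 => by simpa using h1
    | n + 1 => norm_pow_le' x n.succ_pos
  rw [congrFun (NormedSpace.exp_eq_tsum 𝕂) x, Real.exp_eq_exp_ℝ,
    congrFun NormedSpace.exp_eq_tsum_div]
  refine (norm_tsum_le_tsum_norm hsum).trans <|
    hsum.tsum_le_tsum (fun n => ?_) (Real.summable_pow_div_factorial _)
  rw [norm_smul, norm_inv, RCLike.norm_natCast, div_eq_inv_mul]
  gcongr
  exact hpow n

theorem mexp_eq_exp {m : Type*} [Fintype m] [DecidableEq m] (A : Matrix m m ℂ) :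
    mexp A = NormedSpace.exp A :=
  (congrFun (NormedSpace.exp_eq_tsum ℂ) A).symm

theorem Matrix.l2_opNorm_one_le {𝕜 n : Type*} [RCLike 𝕜] [Fintype n] [DecidableEq n] :
    ‖(1 : Matrix n n 𝕜)‖ ≤ 1 := by
  rw [Matrix.cstar_norm_def, map_one]
  exact ContinuousLinearMap.norm_id_le

theorem l2_opNorm_conjTranspose_mexp_smul_le {m : Type*} [Fintype m] [DecidableEq m]
    {A : Matrix m m ℂ} {t ℓ : ℝ} (ht : 0 ≤ t) (hA : ‖A‖ ≤ ℓ) :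
    ‖(mexp ((t : ℂ) • A))ᴴ‖ ≤ Real.exp (t * ℓ) := by
  rw [Matrix.l2_opNorm_conjTranspose, mexp_eq_exp]
  refine (NormedSpace.norm_exp_le_exp_norm ℂ Matrix.l2_opNorm_one_le _).trans ?_
  rw [Real.exp_le_exp, norm_smul, Complex.norm_real, Real.norm_of_nonneg ht]
  gcongr

theorem EuclideanSpace.norm_toLp {𝕜 ι : Type*} [RCLike 𝕜] [Fintype ι] (x : ι → 𝕜) :
    ‖WithLp.toLp 2 x‖ = √(∑ i, ‖x i‖ ^ 2) :=
  EuclideanSpace.norm_eq _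

theorem matSpectralNorm_eq_l2_opNorm {𝕜 : Type*} [RCLike 𝕜] {m n : Type*} [Fintype m]
    [Fintype n] [DecidableEq n] (A : Matrix m n 𝕜) : matSpectralNorm A = ‖A‖ := by
  have hpos {x : n → 𝕜} (hx : x ≠ 0) : 0 < √(∑ j, ‖x j‖ ^ 2) := by
    rw [← EuclideanSpace.norm_toLp]
    exact norm_pos_iff.mpr (by simpa using hx)
  have hle : ∀ r ∈ {r : ℝ | ∃ x : n → 𝕜, x ≠ 0 ∧
      r = √(∑ i, ‖(A *ᵥ x) i‖ ^ 2) / √(∑ j, ‖x j‖ ^ 2)}, r ≤ ‖A‖ := by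
    rintro r ⟨x, hx, rfl⟩
    rw [div_le_iff₀ (hpos hx), ← EuclideanSpace.norm_toLp, ← EuclideanSpace.norm_toLp]
    exact A.l2_opNorm_mulVec (WithLp.toLp 2 x)
  refine le_antisymm (Real.sSup_le hle (norm_nonneg A)) ?_
  rw [Matrix.l2_opNorm_def]
  refine ContinuousLinearMap.opNorm_le_bound _ (Real.sSup_nonneg ?_) fun x => ?_
  · rintro r ⟨x, -, rfl⟩
    positivity
  rcases eq_or_ne x 0 with rfl | hx
  · simp
  have hx' : WithLp.ofLp x ≠ 0 := by simpa using hx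
  have := le_csSup ⟨‖A‖, hle⟩ ⟨WithLp.ofLp x, hx', rfl⟩
  rwa [div_le_iff₀ (hpos hx'), ← EuclideanSpace.norm_toLp, ← EuclideanSpace.norm_toLp,
    WithLp.toLp_ofLp] at this

theorem Real.sqrt_le_mul_sqrt_iff {a b c : ℝ} (hb : 0 ≤ b) (hc : 0 ≤ c) :
    √a ≤ c * √b ↔ a ≤ c ^ 2 * b := by
  rw [← Real.sqrt_sq hc, ← Real.sqrt_mul (sq_nonneg c), Real.sqrt_le_sqrt_iff (by positivity),
    Real.sqrt_sq hc]

section WeightedNorm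

variable {S : Type*} [Fintype S] {π : S → ℝ}

theorem piNorm_eq_norm_toLp (hπ : ∀ i, 0 ≤ π i) (x : S → ℂ) :
    piNorm π x = ‖WithLp.toLp 2 (fun i => x i / (√(π i) : ℂ))‖ := by
  rw [EuclideanSpace.norm_toLp, piNorm]
  congr 1
  refine Finset.sum_congr rfl fun i _ => ?_
  rw [norm_div, Complex.norm_real, Real.norm_of_nonneg (Real.sqrt_nonneg _), div_pow,
    Real.sq_sqrt (hπ i)]

theorem exists_piNorm_mulVec_le [DecidableEq S] (hπ : ∀ i, 0 < π i) (A : Matrix S S ℂ) :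
    ∃ C, ∀ x, piNorm π (A *ᵥ x) ≤ C * piNorm π x := by
  have hsqrt (i : S) : (√(π i) : ℂ) ≠ 0 := by exact_mod_cast (Real.sqrt_pos.mpr (hπ i)).ne'
  let B : Matrix S S ℂ := Matrix.of fun i j => A i j * (√(π j) / √(π i) : ℂ)
  refine ⟨‖B‖, fun x => ?_⟩
  have hB : (fun i => (A *ᵥ x) i / (√(π i) : ℂ)) = B *ᵥ fun j => x j / (√(π j) : ℂ) := by
    funext i
    simp only [mulVec, dotProduct, B, Matrix.of_apply, Finset.sum_div]
    refine Finset.sum_congr rfl fun j _ => ?_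
    field_simp [hsqrt i, hsqrt j]
  rw [piNorm_eq_norm_toLp (fun i => (hπ i).le), piNorm_eq_norm_toLp (fun i => (hπ i).le), hB]
  exact B.l2_opNorm_mulVec (WithLp.toLp 2 fun j => x j / (√(π j) : ℂ))

theorem piNorm_pos (hπ : ∀ i, 0 < π i) {x : S → ℂ} (hx : x ≠ 0) : 0 < piNorm π x := by
  obtain ⟨i, hi⟩ := Function.ne_iff.mp hx
  exact Real.sqrt_pos.mpr <| Finset.sum_pos' (fun j _ => div_nonneg (sq_nonneg _) (hπ j).le)
    ⟨i, Finset.mem_univ i, div_pos (pow_pos (norm_pos_iff.mpr hi) 2) (hπ i)⟩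

theorem specExp_nonneg (P : Matrix S S ℝ) : 0 ≤ specExp P π := by
  refine Real.sSup_nonneg ?_
  rintro r ⟨x, -, -, rfl⟩
  exact div_nonneg (Real.sqrt_nonneg _) (Real.sqrt_nonneg _)

theorem piNorm_mulVec_le_specExp [DecidableEq S] (hπ : ∀ i, 0 < π i) (P : Matrix S S ℝ)
    {x : S → ℂ} (hx : ∑ i, x i = 0) :
    piNorm π ((P.map Complex.ofReal)ᵀ *ᵥ x) ≤ specExp P π * piNorm π x := by
  rcases eq_or_ne x 0 with rfl | hx0
  · simp [piNorm]
  obtain ⟨C, hC⟩ := exists_piNorm_mulVec_le hπ (P.map Complex.ofReal)ᵀ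
  have hbdd : BddAbove {r : ℝ | ∃ x : S → ℂ, x ≠ 0 ∧ piInner π x (fun i => (π i : ℂ)) = 0 ∧
      r = piNorm π ((P.map Complex.ofReal)ᵀ *ᵥ x) / piNorm π x} := by
    refine ⟨C, ?_⟩
    rintro r ⟨x, hx, -, rfl⟩
    exact (div_le_iff₀ (piNorm_pos hπ hx)).mpr (hC x)
  have hinner : piInner π x (fun i => (π i : ℂ)) = 0 := by
    rw [piInner, ← hx]
    refine Finset.sum_congr rfl fun i _ => ?_
    have : (π i : ℂ) ≠ 0 := by exact_mod_cast (hπ i).ne'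
    rw [Complex.conj_ofReal]
    field_simp
  have := le_csSup hbdd ⟨x, hx0, hinner, rfl⟩
  rwa [div_le_iff₀ (piNorm_pos hπ hx0)] at this

end WeightedNorm

theorem Matrix.kronecker_one_mulVec_apply {R n m : Type*} [CommSemiring R] [Fintype n]
    [Fintype m] [DecidableEq m] (A : Matrix n n R) (x : n × m → R) (i : n) (l : m) :
    ((A ⊗ₖ (1 : Matrix m m R)) *ᵥ x) (i, l) = (A *ᵥ fun j => x (j, l)) i := by
  simp [mulVec, dotProduct, Fintype.sum_prod_type, Matrix.one_apply]

theorem Matrix.kronecker_one_transpose {R n m : Type*} [CommSemiring R] [DecidableEq m]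
    (A : Matrix n n R) : (A ⊗ₖ (1 : Matrix m m R))ᵀ = Aᵀ ⊗ₖ (1 : Matrix m m R) := by
  rw [← kroneckerMap_transpose, transpose_one]

theorem blockDiag'_conjTranspose {S m : Type*} [DecidableEq S] (M : S → Matrix m m ℂ) :
    (blockDiag' M)ᴴ = blockDiag' fun i => (M i)ᴴ := by
  ext p q
  by_cases h : p.1 = q.1 <;> simp [_root_.blockDiag', h, eq_comm]

theorem blockDiag'_mulVec_apply {S m : Type*} [Fintype S] [Fintype m] [DecidableEq S]
    (M : S → Matrix m m ℂ) (x : S × m → ℂ) (p : S × m) :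
    (blockDiag' M *ᵥ x) p = (M p.1 *ᵥ fun k => x (p.1, k)) p.2 := by
  simp [_root_.blockDiag', mulVec, dotProduct, Fintype.sum_prod_type]

section KroneckerSpace

variable {N m : ℕ} {π : Fin N → ℝ}

theorem piNormKron_le_mul_of_sum_le {c : ℝ} (hc : 0 ≤ c) {x y : Fin N × Fin m → ℂ}
    (h : ∑ p, ‖x p‖ ^ 2 / π p.1 ≤ c ^ 2 * ∑ p, ‖y p‖ ^ 2 / π p.1) :
    piNormKron π x ≤ c * piNormKron π y := by
  rw [piNormKron, piNormKron, ← Real.sqrt_sq hc, ← Real.sqrt_mul (sq_nonneg c)]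
  exact Real.sqrt_le_sqrt h

theorem piNormKron_kronecker_one_mulVec_le (hπ : ∀ i, 0 ≤ π i) {c : ℝ} (hc : 0 ≤ c)
    {A : Matrix (Fin N) (Fin N) ℂ} {x : Fin N × Fin m → ℂ}
    (hcol : ∀ l, piNorm π (A *ᵥ fun i => x (i, l)) ≤ c * piNorm π fun i => x (i, l)) :
    piNormKron π ((A ⊗ₖ (1 : Matrix (Fin m) (Fin m) ℂ)) *ᵥ x) ≤ c * piNormKron π x := by
  refine piNormKron_le_mul_of_sum_le hc ?_
  simp only [Fintype.sum_prod_type_right, Matrix.kronecker_one_mulVec_apply]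
  rw [Finset.mul_sum]
  refine Finset.sum_le_sum fun l _ => ?_
  have hnonneg : 0 ≤ ∑ i, ‖x (i, l)‖ ^ 2 / π i :=
    Finset.sum_nonneg fun i _ => div_nonneg (sq_nonneg _) (hπ i)
  exact (Real.sqrt_le_mul_sqrt_iff hnonneg hc).mp (hcol l)

theorem piNormKron_blockDiag'_mulVec_le (hπ : ∀ i, 0 ≤ π i) {c : ℝ} (hc : 0 ≤ c)
    {M : Fin N → Matrix (Fin m) (Fin m) ℂ} (hM : ∀ i, ‖M i‖ ≤ c) (x : Fin N × Fin m → ℂ) :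
    piNormKron π (blockDiag' M *ᵥ x) ≤ c * piNormKron π x := by
  refine piNormKron_le_mul_of_sum_le hc ?_
  simp only [Fintype.sum_prod_type, blockDiag'_mulVec_apply, ← Finset.sum_div]
  rw [Finset.mul_sum]
  refine Finset.sum_le_sum fun i _ => ?_
  rw [← mul_div_assoc]
  refine div_le_div_of_nonneg_right ?_ (hπ i)
  have h := ((M i).l2_opNorm_mulVec (WithLp.toLp 2 fun k => x (i, k))).trans
    (mul_le_mul_of_nonneg_right (hM i) (norm_nonneg _))
  rw [← Real.sqrt_le_mul_sqrt_iff (by positivity) hc, ← EuclideanSpace.norm_toLp,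
    ← EuclideanSpace.norm_toLp]
  exact h

end KroneckerSpace

section OrthogonalDecomposition

variable {N m : ℕ} {π : Fin N → ℝ}

theorem memU.sub {x y : Fin N × Fin m → ℂ} (hx : memU π x) (hy : memU π y) :
    memU π (x - y) := by
  obtain ⟨v, hv⟩ := hx
  obtain ⟨w, hw⟩ := hy
  exact ⟨v - w, fun p => by simp [hv p, hw p, mul_sub]⟩

theorem piInnerKron_kron_right (hπ : ∀ i, π i ≠ 0) (x : Fin N × Fin m → ℂ) (w : Fin m → ℂ) :
    piInnerKron π x (fun p => (π p.1 : ℂ) * w p.2) =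
      ∑ l, (starRingEnd ℂ) (w l) * ∑ i, x (i, l) := by
  rw [piInnerKron, Fintype.sum_prod_type_right]
  refine Finset.sum_congr rfl fun l _ => ?_
  rw [Finset.mul_sum]
  refine Finset.sum_congr rfl fun i _ => ?_
  have : (π i : ℂ) ≠ 0 := by exact_mod_cast hπ i
  rw [map_mul, Complex.conj_ofReal]
  field_simp

theorem perpU_iff_sum_eq_zero (hπ : ∀ i, π i ≠ 0) {x : Fin N × Fin m → ℂ} :
    perpU π x ↔ ∀ l, ∑ i, x (i, l) = 0 := by
  simp only [perpU, piInnerKron_kron_right hπ]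
  refine ⟨fun h l => ?_, fun h w => by simp [h]⟩
  simpa [Pi.single_apply] using h (Pi.single l 1)

theorem perpU_sub_kron_sum (hπ : ∀ i, π i ≠ 0) (hπ1 : ∑ i, π i = 1)
    (v : Fin N × Fin m → ℂ) : perpU π fun p => v p - π p.1 * ∑ i, v (i, p.2) := by
  rw [perpU_iff_sum_eq_zero hπ]
  intro l
  simp only [Finset.sum_sub_distrib, ← Finset.sum_mul, ← Complex.ofReal_sum, hπ1]
  simp

theorem piNormKron_le_of_eq_add (hπ : ∀ i, 0 < π i) {a b c : Fin N × Fin m → ℂ}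
    (habc : a = b + c) (hb : memU π b) (hc : perpU π c) :
    piNormKron π c ≤ piNormKron π a := by
  obtain ⟨w, hw⟩ := hb
  have hcol := (perpU_iff_sum_eq_zero fun i => (hπ i).ne').mp hc
  have hcross : ∑ p, (b p * (starRingEnd ℂ) (c p)).re / π p.1 = 0 := by
    have (p : Fin N × Fin m) :
        (b p * (starRingEnd ℂ) (c p)).re / π p.1 = (w p.2 * (starRingEnd ℂ) (c p)).re := by
      rw [hw p, mul_assoc, Complex.re_ofReal_mul, mul_div_cancel_left₀ _ (hπ _).ne']
    simp_rw [this, ← Complex.re_sum, Fintype.sum_prod_type_right, ← Finset.mul_sum, ← map_sum,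
      hcol, map_zero, mul_zero, Finset.sum_const_zero, Complex.zero_re]
  have hpyth (p : Fin N × Fin m) : ‖a p‖ ^ 2 / π p.1 = ‖b p‖ ^ 2 / π p.1 + ‖c p‖ ^ 2 / π p.1
      + 2 * ((b p * (starRingEnd ℂ) (c p)).re / π p.1) := by
    rw [habc, Pi.add_apply, Complex.sq_norm, Complex.sq_norm, Complex.sq_norm,
      Complex.normSq_add]
    ring
  have hb_nonneg : 0 ≤ ∑ p, ‖b p‖ ^ 2 / π p.1 :=
    Finset.sum_nonneg fun p _ => div_nonneg (sq_nonneg _) (hπ _).le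
  refine Real.sqrt_le_sqrt ?_
  simp only [hpyth, Finset.sum_add_distrib, ← Finset.mul_sum, hcross]
  linarith

end OrthogonalDecomposition

theorem kronecker_one_transpose_mulVec_of_memU {N m : ℕ} {P : Matrix (Fin N) (Fin N) ℝ}
    {π : Fin N → ℝ} (hstat : ∀ j, ∑ i, π i * P i j = π j) {b : Fin N × Fin m → ℂ}
    (hb : memU π b) : ((P.map Complex.ofReal) ⊗ₖ (1 : Matrix (Fin m) (Fin m) ℂ))ᵀ *ᵥ b = b := by
  obtain ⟨w, hw⟩ := hb
  ext ⟨j, l⟩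
  rw [Matrix.kronecker_one_transpose, Matrix.kronecker_one_mulVec_apply, hw]
  simp only [mulVec, dotProduct, transpose_apply, map_apply, hw]
  rw [← hstat j, Complex.ofReal_sum, Finset.sum_mul]
  refine Finset.sum_congr rfl fun i _ => ?_
  push_cast
  ring

theorem piNormKron_transition_mulVec_le {N m : ℕ} {π : Fin N → ℝ} (hπ : ∀ i, 0 < π i)
    (P : Matrix (Fin N) (Fin N) ℝ) {x : Fin N × Fin m → ℂ} (hx : perpU π x) :
    piNormKron π (((P.map Complex.ofReal) ⊗ₖ (1 : Matrix (Fin m) (Fin m) ℂ))ᵀ *ᵥ x) ≤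
      specExp P π * piNormKron π x := by
  rw [Matrix.kronecker_one_transpose]
  refine piNormKron_kronecker_one_mulVec_le (fun i => (hπ i).le) (specExp_nonneg P) fun l => ?_
  exact piNorm_mulVec_le_specExp hπ P ((perpU_iff_sum_eq_zero fun i => (hπ i).ne').mp hx l)

theorem stmt_15_general {N m : ℕ}
    (P : Matrix (Fin N) (Fin N) ℝ) (π : Fin N → ℝ)
    (hπ : IsStationaryMC P π)
    (ℓ t : ℝ) (ht : 0 < t)
    (H : Fin N → Matrix (Fin m) (Fin m) ℂ)
    (hH : ∀ i, matSpectralNorm (H i) ≤ ℓ)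
    (zperp : Fin N × Fin m → ℂ)
    (y ypar yperp : Fin N × Fin m → ℂ)
    (hy : y = ((P.map Complex.ofReal) ⊗ₖ (1 : Matrix (Fin m) (Fin m) ℂ))ᵀ *ᵥ
      ((blockDiag' fun i => mexp ((t : ℂ) • H i))ᴴ *ᵥ zperp))
    (hdecy : y = ypar + yperp) (hypar : memU π ypar) (hyperp : perpU π yperp) :
    piNormKron π yperp ≤ (specExp P π * Real.exp (t * ℓ)) * piNormKron π zperp := by
  obtain ⟨hπpos, hπ1, hstat⟩ := hπ
  have hv : piNormKron π ((blockDiag' fun i => mexp ((t : ℂ) • H i))ᴴ *ᵥ zperp) ≤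
      Real.exp (t * ℓ) * piNormKron π zperp := by
    rw [_root_.blockDiag'_conjTranspose]
    refine piNormKron_blockDiag'_mulVec_le (fun i => (hπpos i).le) (Real.exp_nonneg _)
      (fun i => l2_opNorm_conjTranspose_mexp_smul_le ht.le ?_) zperp
    exact matSpectralNorm_eq_l2_opNorm (H i) ▸ hH i
  set v := (blockDiag' fun i => mexp ((t : ℂ) • H i))ᴴ *ᵥ zperp
  set vpar : Fin N × Fin m → ℂ := fun p => π p.1 * ∑ i, v (i, p.2)
  have hvpar : memU π vpar := ⟨fun l => ∑ i, v (i, l), fun _ => rfl⟩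
  have hvperp : perpU π (v - vpar) := perpU_sub_kron_sum (fun i => (hπpos i).ne') hπ1 v
  have hyperp' : ((P.map Complex.ofReal) ⊗ₖ (1 : Matrix (Fin m) (Fin m) ℂ))ᵀ *ᵥ (v - vpar) =
      (ypar - vpar) + yperp := by
    rw [mulVec_sub, kronecker_one_transpose_mulVec_of_memU hstat hvpar, ← hy, hdecy]
    abel
  calc piNormKron π yperp
      ≤ piNormKron π (((P.map Complex.ofReal) ⊗ₖ (1 : Matrix (Fin m) (Fin m) ℂ))ᵀ *ᵥ
          (v - vpar)) := piNormKron_le_of_eq_add hπpos hyperp' (hypar.sub hvpar) hyperp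
    _ ≤ specExp P π * piNormKron π (v - vpar) := piNormKron_transition_mulVec_le hπpos P hvperp
    _ ≤ specExp P π * piNormKron π v := by
        gcongr
        · exact specExp_nonneg P
        · exact piNormKron_le_of_eq_add hπpos (add_sub_cancel vpar v).symm hvpar hvperp
    _ ≤ specExp P π * (Real.exp (t * ℓ) * piNormKron π zperp) := by
        gcongr
        exact specExp_nonneg P
    _ = specExp P π * Real.exp (t * ℓ) * piNormKron π zperp := by ring

theorem stmt_15 {N m : ℕ} (hm : 1 ≤ m)
    (P : Matrix (Fin N) (Fin N) ℝ) (π : Fin N → ℝ)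
    (hP : IsMarkov P) (hreg : IsRegularMC P) (hπ : IsStationaryMC P π)
    (ℓ t : ℝ) (hℓ : 0 ≤ ℓ) (ht : 0 < t)
    (H : Fin N → Matrix (Fin m) (Fin m) ℂ)
    (hH : ∀ i, matSpectralNorm (H i) ≤ ℓ)
    (hmean : ∑ i, π i • H i = 0)
    (z zpar zperp : Fin N × Fin m → ℂ)
    (hdecz : z = zpar + zperp) (hzpar : memU π zpar) (hzperp : perpU π zperp)
    (y ypar yperp : Fin N × Fin m → ℂ)
    (hy : y = ((P.map Complex.ofReal) ⊗ₖ (1 : Matrix (Fin m) (Fin m) ℂ))ᵀ *ᵥ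
      ((blockDiag' fun i => mexp ((t : ℂ) • H i))ᴴ *ᵥ zperp))
    (hdecy : y = ypar + yperp) (hypar : memU π ypar) (hyperp : perpU π yperp) :
    piNormKron π yperp ≤ (specExp P π * Real.exp (t * ℓ)) * piNormKron π zperp :=
  stmt_15_general P π hπ ℓ t ht H hH zperp y ypar yperp hy hdecy hypar hyperp
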